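/- Let X₁,…,X_N be i.i.d. random variables taking values in [0,1] with mean μ, and let S_N = (1/N)Σ X_i. Then E[exp(N·kl(S_N || μ))] ≤ 2√N, where kl is the binary KL divergence. -/

import Mathlib

open MeasureTheory ProbabilityTheory
open scoped BigOperators

/-- Binary Kullback-Leibler divergence. -/
noncomputable def bkl (p q : ℝ) : ℝ :=
  p * Real.log (p / q) + (1 - p) * Real.log ((1 - p) / (1 - q))

/-!
Since `t ↦ exp (N · kl(t/N ‖ μ₀))` is convex on `[0, N]`, expanding it multilinearly in one
`Xᵢ` at a time shows that replacing the `Xᵢ` by independent Bernoulli variables with the same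
mean can only increase the expectation. For a binomial sum, the `k`-th term of the expectation is
at most `C(N,k) (k/N)^k (1 - k/N)^(N-k)`, and an Abel-type identity turns the sum of these into
`∑ᵢ N!/((N-i)! Nⁱ) ≤ ∑ᵢ exp(-i(i-1)/2N)`, which a Gaussian integral bounds by
`2 + √(2πN)/2 ≤ 2√N` once `N ≥ 8`.
-/

open Finset Real

/-- Abel's sum `∑ₖ C(n+1,k) x (x+k)^(k-1) (y+n+1-k)^(n+1-k)` without its `k = 0` term
`(y+n+1)^(n+1)`, so that no exponent `k - 1` occurs. -/
noncomputable def abelSum (n : ℕ) (x y : ℝ) : ℝ :=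
  ∑ p ∈ antidiagonal n,
    ((n + 1).choose (p.1 + 1) : ℝ) * x * (x + (p.1 + 1)) ^ p.1 * (y + p.2) ^ p.2

noncomputable def selfPowSum (n : ℕ) (x y : ℝ) : ℝ :=
  ∑ p ∈ antidiagonal n, (n.choose p.1 : ℝ) * (x + p.1) ^ p.1 * (y + p.2) ^ p.2

noncomputable def descPowSum (n : ℕ) (s : ℝ) : ℝ :=
  ∑ p ∈ antidiagonal n, (n.descFactorial p.1 : ℝ) * s ^ p.2

theorem descPowSum_succ (n : ℕ) (s : ℝ) :
    descPowSum (n + 1) s = s ^ (n + 1) + (n + 1) * descPowSum n s := by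
  simp only [descPowSum, Nat.sum_antidiagonal_succ, Nat.succ_descFactorial_succ, mul_sum]
  push_cast
  simp only [Nat.descFactorial_zero, Nat.cast_one, one_mul, mul_assoc]

theorem selfPowSum_succ (n : ℕ) (x y : ℝ) :
    selfPowSum (n + 1) x y
      = (y + (n + 1)) ^ (n + 1) + abelSum n x y + (n + 1) * selfPowSum n (x + 1) y := by
  rw [selfPowSum, Nat.sum_antidiagonal_succ, abelSum, selfPowSum, mul_sum, add_assoc,
    ← sum_add_distrib]
  congr 1
  · simp
  refine sum_congr rfl fun p _ => ?_
  have hchoose :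
      ((n + 1 : ℕ) : ℝ) * n.choose p.1 = (n + 1).choose (p.1 + 1) * (p.1 + 1 : ℕ) :=
    mod_cast Nat.add_one_mul_choose_eq n p.1
  push_cast at hchoose ⊢
  linear_combination (-(x + 1 + p.1) ^ p.1 * (y + p.2) ^ p.2) * hchoose

theorem abelSum_succ (n : ℕ) (x y : ℝ) :
    abelSum (n + 1) x y = (x + y + (n + 2)) * abelSum n x (y + 1)
      + x * (selfPowSum (n + 1) (x + 1) y - selfPowSum (n + 1) x (y + 1))
      + x * (y + (n + 2)) ^ (n + 1) := by
  have hpascal : abelSum (n + 1) x y = x * selfPowSum (n + 1) (x + 1) y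
      + ∑ p ∈ antidiagonal (n + 1),
          ((n + 1).choose (p.1 + 1) : ℝ) * x * (x + (p.1 + 1)) ^ p.1 * (y + p.2) ^ p.2 := by
    simp only [abelSum, selfPowSum, Nat.choose_succ_succ', mul_sum, ← sum_add_distrib]
    refine sum_congr rfl fun p _ => ?_
    push_cast
    ring
  have hshift : selfPowSum (n + 1) x (y + 1) = (y + (n + 2)) ^ (n + 1) + ∑ p ∈ antidiagonal n,
      ((n + 1).choose (p.1 + 1) : ℝ) * (x + (p.1 + 1)) ^ (p.1 + 1) * (y + 1 + p.2) ^ p.2 := by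
    rw [selfPowSum, Nat.sum_antidiagonal_succ]
    congr 1
    · simp only [Nat.choose_zero_right]
      push_cast
      ring
    · refine sum_congr rfl fun p _ => ?_
      push_cast
      ring
  rw [hpascal, Nat.sum_antidiagonal_succ', hshift, abelSum]
  simp only [Nat.choose_succ_self, Nat.cast_zero, zero_mul, zero_add]
  -- `y + (l + 1) = (x + y + n + 2) - (x + k + 1)` on the antidiagonal `k + l = n`
  have hterm : ∀ p ∈ antidiagonal n,
      ((n + 1).choose (p.1 + 1) : ℝ) * x * (x + (p.1 + 1)) ^ p.1
          * (y + (p.2 + 1 : ℕ)) ^ (p.2 + 1)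
        = (x + y + (n + 2))
            * (((n + 1).choose (p.1 + 1) : ℝ) * x * (x + (p.1 + 1)) ^ p.1 * (y + 1 + p.2) ^ p.2)
          - x * (((n + 1).choose (p.1 + 1) : ℝ) * (x + (p.1 + 1)) ^ (p.1 + 1)
            * (y + 1 + p.2) ^ p.2) := by
    intro p hp
    have hn : (p.1 : ℝ) + p.2 = n := mod_cast mem_antidiagonal.mp hp
    push_cast
    rw [pow_succ, pow_succ]
    linear_combination
      (((n + 1).choose (p.1 + 1) : ℝ) * x * (x + (p.1 + 1)) ^ p.1 * (y + 1 + p.2) ^ p.2) * hn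
  rw [sum_congr rfl hterm, sum_sub_distrib, ← mul_sum, ← mul_sum]
  ring

theorem selfPowSum_eq_descPowSum_and_abel (n : ℕ) : ∀ x y : ℝ,
    selfPowSum n x y = descPowSum n (x + y + n)
      ∧ (y + (n + 1)) ^ (n + 1) + abelSum n x y = (x + y + (n + 1)) ^ (n + 1) := by
  induction n with
  | zero => intro x y; simp [selfPowSum, descPowSum, abelSum]; ring
  | succ n ih =>
    have hF : ∀ x y : ℝ,
        selfPowSum (n + 1) x y = descPowSum (n + 1) (x + y + (n + 1 : ℕ)) := by
      intro x y
      rw [selfPowSum_succ, (ih x y).2, (ih (x + 1) y).1, descPowSum_succ]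
      push_cast
      ring_nf
    refine fun x y => ⟨hF x y, ?_⟩
    -- Abel's identity for `n + 1` needs `selfPowSum (n + 1)` to depend on `x + y` only
    have hsym : selfPowSum (n + 1) (x + 1) y = selfPowSum (n + 1) x (y + 1) := by
      rw [hF, hF]
      ring_nf
    have habel := (ih x (y + 1)).2
    rw [abelSum_succ, hsym, sub_self, mul_zero, add_zero]
    push_cast
    linear_combination (x + y + (n + 2)) * habel

theorem sum_choose_mul_div_pow_mul_div_pow (n : ℕ) :
    ∑ p ∈ antidiagonal n, (n.choose p.1 : ℝ) * (p.1 / n : ℝ) ^ p.1 * (p.2 / n : ℝ) ^ p.2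
      = ∑ i ∈ range (n + 1), (n.descFactorial i : ℝ) / (n : ℝ) ^ i := by
  rcases Nat.eq_zero_or_pos n with rfl | hn
  · simp
  have hid := (selfPowSum_eq_descPowSum_and_abel n 0 0).1
  simp only [selfPowSum, descPowSum, zero_add] at hid
  have hpow : ∀ p ∈ antidiagonal n, (n : ℝ) ^ n = (n : ℝ) ^ p.1 * (n : ℝ) ^ p.2 :=
    fun p hp => by rw [← pow_add, mem_antidiagonal.mp hp]
  calc _ = (∑ p ∈ antidiagonal n, (n.choose p.1 : ℝ) * (p.1 : ℝ) ^ p.1 * (p.2 : ℝ) ^ p.2)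
          / (n : ℝ) ^ n := by
        rw [sum_div]
        refine sum_congr rfl fun p hp => ?_
        rw [hpow p hp]
        ring
    _ = ∑ p ∈ antidiagonal n, (n.descFactorial p.1 : ℝ) / (n : ℝ) ^ p.1 := by
        rw [hid, sum_div]
        refine sum_congr rfl fun p hp => ?_
        rw [hpow p hp]
        field_simp
    _ = ∑ i ∈ range (n + 1), (n.descFactorial i : ℝ) / (n : ℝ) ^ i :=
        Nat.sum_antidiagonal_eq_sum_range_succ
          (fun i _ => (n.descFactorial i : ℝ) / (n : ℝ) ^ i) n

theorem descFactorial_div_pow_le_exp (n k : ℕ) :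
    (n.descFactorial k : ℝ) / (n : ℝ) ^ k ≤ exp (-(k.choose 2 : ℝ) / n) := by
  rcases Nat.eq_zero_or_pos n with rfl | hn
  · rcases Nat.eq_zero_or_pos k with rfl | hk
    · simp
    · simp [zero_pow hk.ne']
  have hn' : (0 : ℝ) < n := by exact_mod_cast hn
  have hfactor : ∀ m ∈ range k, ((n - m : ℕ) : ℝ) / n ≤ exp (-(m : ℝ) / n) := by
    intro m _
    rcases le_or_gt m n with hm | hm
    · rw [Nat.cast_sub hm, sub_div, div_self hn'.ne', neg_div]
      linarith [add_one_le_exp (-((m : ℝ) / n))]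
    · rw [Nat.sub_eq_zero_of_le hm.le, Nat.cast_zero, zero_div]
      exact (exp_pos _).le
  calc (n.descFactorial k : ℝ) / (n : ℝ) ^ k
      = ∏ m ∈ range k, ((n - m : ℕ) : ℝ) / n := by
        rw [Nat.descFactorial_eq_prod_range, prod_div_distrib, prod_const, card_range]
        push_cast
        rfl
    _ ≤ ∏ m ∈ range k, exp (-(m : ℝ) / n) := prod_le_prod (fun _ _ => by positivity) hfactor
    _ = exp (-(k.choose 2 : ℝ) / n) := by
        rw [← exp_sum, ← sum_div, sum_neg_distrib, Nat.choose_two_right, ← sum_range_id]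
        push_cast
        rfl

theorem sum_range_exp_neg_mul_sq_le {c : ℝ} (hc : 0 < c) (m : ℕ) :
    ∑ i ∈ range m, exp (-c * (i : ℝ) ^ 2) ≤ 1 + √(π / c) / 2 := by
  cases m with
  | zero => simp only [range_zero, sum_empty]; positivity
  | succ m =>
    set g : ℝ → ℝ := fun x => exp (-c * x ^ 2)
    have hanti : AntitoneOn g (Set.Icc 0 (0 + m)) := fun a ha b _ hab => by
      simp only [g, exp_le_exp, neg_mul, neg_le_neg_iff]
      exact mul_le_mul_of_nonneg_left (pow_le_pow_left₀ ha.1 hab 2) hc.le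
    have hintegral : ∫ x in (0 : ℝ)..(0 + m), g x ≤ ∫ x in Set.Ioi (0 : ℝ), g x := by
      rw [zero_add, intervalIntegral.integral_of_le (Nat.cast_nonneg m)]
      exact setIntegral_mono_set (integrable_exp_neg_mul_sq hc).integrableOn
        (Filter.Eventually.of_forall fun x => (exp_pos _).le) Set.Ioc_subset_Ioi_self.eventuallyLE
    have htail : ∑ i ∈ range m, g (0 + (i + 1 : ℕ)) ≤ √(π / c) / 2 :=
      (hanti.sum_le_integral.trans hintegral).trans_eq (integral_gaussian_Ioi c)
    rw [sum_range_succ']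
    simp only [g, zero_add] at htail
    simpa [add_comm] using htail

theorem sum_descFactorial_div_pow_le (n : ℕ) (hn : 0 < n) :
    ∑ i ∈ range (n + 1), (n.descFactorial i : ℝ) / (n : ℝ) ^ i ≤ 2 * √n := by
  have hsqrt : 2 * √n = √(4 * n) := by
    rw [sqrt_mul (by norm_num), show (4 : ℝ) = 2 ^ 2 by norm_num, sqrt_sq (by norm_num)]
  rcases lt_or_ge n 8 with hsmall | hlarge
  · -- the Gaussian bound below is too weak for small `n`
    rw [hsqrt]
    refine le_sqrt_of_sq_le ?_
    interval_cases n <;> norm_num [sum_range_succ, Nat.descFactorial]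
  have hterm : ∀ i ∈ range n, (n.descFactorial (i + 1) : ℝ) / (n : ℝ) ^ (i + 1)
      ≤ exp (-(1 / (2 * n)) * (i : ℝ) ^ 2) := by
    intro i _
    refine (descFactorial_div_pow_le_exp n (i + 1)).trans (exp_le_exp.mpr ?_)
    rw [Nat.cast_choose_two]
    push_cast
    rw [neg_div, neg_mul, neg_le_neg_iff, div_div, one_div_mul_eq_div,
      div_le_div_iff_of_pos_right (by positivity)]
    nlinarith
  have hgauss : √(π / (1 / (2 * n))) = √(2 * π) * √n := by
    rw [← sqrt_mul (by positivity)]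
    congr 1
    field_simp
  have hpi : √(2 * π) ≤ 2.51 := by
    rw [sqrt_le_left (by norm_num)]
    nlinarith [pi_lt_d2]
  have hn8 : 2.82 ≤ √n := le_sqrt_of_sq_le (le_trans (by norm_num) (Nat.cast_le.mpr hlarge))
  calc ∑ i ∈ range (n + 1), (n.descFactorial i : ℝ) / (n : ℝ) ^ i
      = 1 + ∑ i ∈ range n, (n.descFactorial (i + 1) : ℝ) / (n : ℝ) ^ (i + 1) := by
        rw [sum_range_succ', add_comm]
        simp
    _ ≤ 1 + (1 + √(π / (1 / (2 * n))) / 2) := by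
        gcongr
        exact (sum_le_sum hterm).trans (sum_range_exp_neg_mul_sq_le (by positivity) n)
    _ ≤ 2 * √n := by
        rw [hgauss]
        nlinarith [sqrt_nonneg (2 * π), sqrt_nonneg (n : ℝ)]

theorem ConvexOn.comp_const_sub {E β : Type*} [AddCommGroup E] [Module ℝ E] [AddCommMonoid β]
    [PartialOrder β] [Module ℝ β] {s : Set E} {f : E → β} (hf : ConvexOn ℝ s f) (c : E) :
    ConvexOn ℝ ((c - ·) ⁻¹' s) (fun x => f (c - x)) :=
  hf.comp_affineMap (AffineMap.const ℝ E c - AffineMap.id ℝ E)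

theorem ConvexOn.exp {E : Type*} [AddCommGroup E] [Module ℝ E] {s : Set E} {f : E → ℝ}
    (hf : ConvexOn ℝ s f) : ConvexOn ℝ s (fun x => exp (f x)) :=
  ⟨hf.1, fun _ hx _ hy _ _ ha hb hab =>
    (exp_le_exp.2 (hf.2 hx hy ha hb hab)).trans (convexOn_exp.2 trivial trivial ha hb hab)⟩

theorem convexOn_mul_log_div (q : ℝ) : ConvexOn ℝ (Set.Ici 0) (fun p => p * log (p / q)) := by
  rcases eq_or_ne q 0 with rfl | hq
  · simpa using convexOn_const (0 : ℝ) (convex_Ici (0 : ℝ))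
  have hlin : (fun p => p * log (p / q)) = fun p => p * log p + (-log q) * p := by
    funext p
    rcases eq_or_ne p 0 with rfl | hp
    · simp
    · rw [log_div hp hq]
      ring
  rw [hlin]
  exact convexOn_mul_log.add ((LinearMap.mul ℝ ℝ (-log q)).convexOn (convex_Ici 0))

theorem convexOn_bkl (q : ℝ) : ConvexOn ℝ (Set.Icc 0 1) (fun p => bkl p q) := by
  have hreflect : Set.Icc (0 : ℝ) 1 ⊆ (1 - ·) ⁻¹' Set.Ici 0 := fun p hp => by
    simpa using hp.2
  exact ((convexOn_mul_log_div q).subset Set.Icc_subset_Ici_self (convex_Icc 0 1)).add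
    (((convexOn_mul_log_div (1 - q)).comp_const_sub 1).subset hreflect (convex_Icc 0 1))

theorem convexOn_exp_mul_bkl_div {n : ℝ} (hn : 0 < n) (q : ℝ) :
    ConvexOn ℝ (Set.Icc 0 n) (fun t => exp (n * bkl (t / n) q)) := by
  have hscale : Set.Icc 0 n ⊆ LinearMap.lsmul ℝ ℝ n⁻¹ ⁻¹' Set.Icc 0 1 := fun t ht => by
    simp only [Set.mem_preimage, LinearMap.lsmul_apply, smul_eq_mul, Set.mem_Icc]
    exact ⟨mul_nonneg (inv_nonneg.2 hn.le) ht.1, inv_mul_le_one_of_le₀ ht.2 hn.le⟩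
  have h := (((convexOn_bkl q).comp_linearMap (LinearMap.lsmul ℝ ℝ n⁻¹)).subset hscale
    (convex_Icc 0 n)).smul hn.le
  simpa [div_eq_inv_mul] using h.exp

theorem exp_nat_mul_log_div_mul_pow_le {p q : ℝ} (k : ℕ) (hp : 0 ≤ p) (hq : 0 ≤ q)
    (hpk : p = 0 → k = 0) : exp (k * log (p / q)) * q ^ k ≤ p ^ k := by
  rcases Nat.eq_zero_or_pos k with rfl | hk
  · simp
  have hp' : 0 < p := hp.lt_of_ne fun h => hk.ne' (hpk h.symm)
  rcases hq.eq_or_lt with rfl | hq'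
  · rw [zero_pow hk.ne', mul_zero]
    positivity
  · rw [exp_nat_mul, exp_log (by positivity), ← mul_pow, div_mul_cancel₀ p hq'.ne']

theorem exp_mul_bkl_mul_pow_le {k l n : ℕ} (hkl : k + l = n) {q : ℝ} (hq : q ∈ Set.Icc 0 1) :
    exp (n * bkl (k / n) q) * (q ^ k * (1 - q) ^ l) ≤ (k / n : ℝ) ^ k * (l / n : ℝ) ^ l := by
  rcases Nat.eq_zero_or_pos n with rfl | hn
  · obtain ⟨rfl, rfl⟩ := Nat.add_eq_zero_iff.mp hkl
    simp
  have hn' : (n : ℝ) ≠ 0 := by positivity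
  have hkl' : (k : ℝ) + l = n := mod_cast hkl
  have hsplit : n * bkl (k / n) q = k * log (k / n / q) + l * log (l / n / (1 - q)) := by
    rw [bkl, show 1 - (k / n : ℝ) = l / n by field_simp; linarith]
    field_simp
  have hzero : ∀ m : ℕ, (m / n : ℝ) = 0 → m = 0 := fun m h => by
    simpa [hn'] using h
  rw [hsplit, exp_add, mul_mul_mul_comm]
  exact mul_le_mul
    (exp_nat_mul_log_div_mul_pow_le k (by positivity) hq.1 (hzero k))
    (exp_nat_mul_log_div_mul_pow_le l (by positivity) (sub_nonneg.2 hq.2) (hzero l))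
    (mul_nonneg (exp_pos _).le (pow_nonneg (sub_nonneg.2 hq.2) l)) (by positivity)

theorem sum_choose_mul_pow_mul_exp_mul_bkl_le {n : ℕ} (hn : 0 < n) {q : ℝ}
    (hq : q ∈ Set.Icc 0 1) :
    ∑ p ∈ antidiagonal n,
      (n.choose p.1 : ℝ) * (q ^ p.1 * (1 - q) ^ p.2) * exp (n * bkl (p.1 / n) q) ≤ 2 * √n :=
  calc ∑ p ∈ antidiagonal n,
        (n.choose p.1 : ℝ) * (q ^ p.1 * (1 - q) ^ p.2) * exp (n * bkl (p.1 / n) q)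
      ≤ ∑ p ∈ antidiagonal n,
          (n.choose p.1 : ℝ) * (p.1 / n : ℝ) ^ p.1 * (p.2 / n : ℝ) ^ p.2 :=
        sum_le_sum fun p hp => by
          have h := mul_le_mul_of_nonneg_left
            (exp_mul_bkl_mul_pow_le (mem_antidiagonal.mp hp) hq)
            (Nat.cast_nonneg (α := ℝ) (n.choose p.1))
          linarith
    _ = ∑ i ∈ range (n + 1), (n.descFactorial i : ℝ) / (n : ℝ) ^ i :=
        sum_choose_mul_div_pow_mul_div_pow n
    _ ≤ 2 * √n := sum_descFactorial_div_pow_le n hn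

section Bernoulli

variable {ι : Type*} [DecidableEq ι]

/-- The probability that independent Bernoulli variables with parameters `x i`, `i ∈ s`,
equal `1` exactly at the indices in `T`. -/
def bernoulliWeight (s : Finset ι) (x : ι → ℝ) (T : Finset ι) : ℝ :=
  ∏ i ∈ s, if i ∈ T then x i else 1 - x i

theorem bernoulliWeight_insert_of_subset {s T : Finset ι} {j : ι} (hj : j ∉ s) (hT : T ⊆ s)
    (x : ι → ℝ) : bernoulliWeight (insert j s) x T = (1 - x j) * bernoulliWeight s x T := by
  rw [bernoulliWeight, prod_insert hj, if_neg fun h => hj (hT h), bernoulliWeight]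

theorem bernoulliWeight_insert_insert {s : Finset ι} {j : ι} (hj : j ∉ s) (T : Finset ι)
    (x : ι → ℝ) :
    bernoulliWeight (insert j s) x (insert j T) = x j * bernoulliWeight s x T := by
  rw [bernoulliWeight, prod_insert hj, if_pos (mem_insert_self j T), bernoulliWeight]
  congr 1
  refine prod_congr rfl fun i hi => ?_
  simp only [mem_insert, ne_of_mem_of_not_mem hi hj, false_or]

theorem bernoulliWeight_mem_Icc {s : Finset ι} {x : ι → ℝ}
    (hx : ∀ i ∈ s, x i ∈ Set.Icc 0 1) (T : Finset ι) :
    bernoulliWeight s x T ∈ Set.Icc 0 1 := by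
  have hfactor : ∀ i ∈ s, (if i ∈ T then x i else 1 - x i) ∈ Set.Icc (0 : ℝ) 1 := by
    intro i hi
    have hxi := hx i hi
    split_ifs
    · exact hxi
    · exact ⟨by linarith [hxi.2], by linarith [hxi.1]⟩
  exact ⟨prod_nonneg fun i hi => (hfactor i hi).1,
    prod_le_one (fun i hi => (hfactor i hi).1) (fun i hi => (hfactor i hi).2)⟩

theorem ConvexOn.map_add_sum_le_sum_bernoulliWeight {φ : ℝ → ℝ} (s : Finset ι) {c : ℝ}
    (hφ : ConvexOn ℝ (Set.Icc c (c + #s)) φ) {x : ι → ℝ}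
    (hx : ∀ i ∈ s, x i ∈ Set.Icc 0 1) :
    φ (c + ∑ i ∈ s, x i) ≤ ∑ T ∈ s.powerset, bernoulliWeight s x T * φ (c + #T) := by
  induction s using Finset.induction_on generalizing c with
  | empty => simp [bernoulliWeight]
  | @insert j s hj ih =>
    have hxj := hx j (mem_insert_self j s)
    have hxs : ∀ i ∈ s, x i ∈ Set.Icc 0 1 := fun i hi => hx i (mem_insert_of_mem hi)
    rw [card_insert_of_notMem hj, Nat.cast_succ] at hφ
    have hsum : ∑ i ∈ s, x i ∈ Set.Icc (0 : ℝ) #s :=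
      ⟨sum_nonneg fun i hi => (hxs i hi).1,
        (sum_le_card_nsmul s x 1 fun i hi => (hxs i hi).2).trans_eq (by simp)⟩
    have hlow : c + ∑ i ∈ s, x i ∈ Set.Icc c (c + (#s + 1)) :=
      ⟨by linarith [hsum.1], by linarith [hsum.2]⟩
    have hhigh : c + 1 + ∑ i ∈ s, x i ∈ Set.Icc c (c + (#s + 1)) :=
      ⟨by linarith [hsum.1], by linarith [hsum.2]⟩
    have ih_low := ih (hφ.subset (Set.Icc_subset_Icc le_rfl (by linarith)) (convex_Icc _ _)) hxs
    have ih_high := ih (c := c + 1)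
      (hφ.subset (Set.Icc_subset_Icc (by linarith) (by linarith)) (convex_Icc _ _)) hxs
    calc φ (c + ∑ i ∈ insert j s, x i)
        = φ ((1 - x j) • (c + ∑ i ∈ s, x i) + x j • (c + 1 + ∑ i ∈ s, x i)) := by
          rw [sum_insert hj, smul_eq_mul, smul_eq_mul]
          ring_nf
      _ ≤ (1 - x j) * φ (c + ∑ i ∈ s, x i) + x j * φ (c + 1 + ∑ i ∈ s, x i) :=
          hφ.2 hlow hhigh (by linarith [hxj.2]) hxj.1 (by ring)
      _ ≤ (1 - x j) * ∑ T ∈ s.powerset, bernoulliWeight s x T * φ (c + #T)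
            + x j * ∑ T ∈ s.powerset, bernoulliWeight s x T * φ (c + 1 + #T) := by
          gcongr
          · linarith [hxj.2]
          · exact hxj.1
      _ = ∑ T ∈ (insert j s).powerset, bernoulliWeight (insert j s) x T * φ (c + #T) := by
          rw [sum_powerset_insert hj, mul_sum, mul_sum]
          congr 1
          · refine sum_congr rfl fun T hT => ?_
            rw [bernoulliWeight_insert_of_subset hj (mem_powerset.mp hT)]
            ring
          · refine sum_congr rfl fun T hT => ?_
            rw [bernoulliWeight_insert_insert hj,
              card_insert_of_notMem fun h => hj (mem_powerset.mp hT h), Nat.cast_succ]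
            ring_nf

end Bernoulli

section Expectation

variable {Ω ι : Type*} [MeasurableSpace Ω] {μ : Measure Ω} [Fintype ι] [DecidableEq ι]
  {X : ι → Ω → ℝ} {m : ℝ}

theorem integral_bernoulliWeight (hindep : iIndepFun X μ) (hint : ∀ i, Integrable (X i) μ)
    (hmean : ∀ i, ∫ ω, X i ω ∂μ = m) (T : Finset ι) :
    ∫ ω, bernoulliWeight univ (X · ω) T ∂μ = m ^ #T * (1 - m) ^ (Fintype.card ι - #T) := by
  have := hindep.isProbabilityMeasure
  have hfactor :
      ∀ i, ∫ ω, (if i ∈ T then X i ω else 1 - X i ω) ∂μ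
        = if i ∈ T then m else 1 - m := by
    intro i
    split_ifs
    · exact hmean i
    · rw [integral_sub (integrable_const 1) (hint i), hmean i, integral_const, probReal_univ,
        one_smul]
  calc ∫ ω, bernoulliWeight univ (X · ω) T ∂μ
      = ∏ i, ∫ ω, (if i ∈ T then X i ω else 1 - X i ω) ∂μ :=
        hindep.integral_fun_prod_comp (f := fun i v => if i ∈ T then v else 1 - v)
          (fun i => (hint i).aemeasurable) (fun i => by split_ifs <;> fun_prop)
    _ = m ^ #T * (1 - m) ^ (Fintype.card ι - #T) := by
        simp only [hfactor, prod_ite, prod_const, filter_mem_eq_inter, univ_inter]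
        rw [← card_compl, compl_eq_univ_sdiff, ← filter_notMem_eq_sdiff]

theorem integral_comp_sum_le_sum_choose_mul_pow [IsProbabilityMeasure μ]
    (hindep : iIndepFun X μ) (hmeas : ∀ i, Measurable (X i))
    (hrange : ∀ i ω, X i ω ∈ Set.Icc 0 1)
    (hmean : ∀ i, ∫ ω, X i ω ∂μ = m) {φ : ℝ → ℝ}
    (hφ : ConvexOn ℝ (Set.Icc 0 (Fintype.card ι : ℝ)) φ) (hφ_nonneg : ∀ t, 0 ≤ φ t) :
    ∫ ω, φ (∑ i, X i ω) ∂μ ≤ ∑ p ∈ antidiagonal (Fintype.card ι),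
      ((Fintype.card ι).choose p.1 : ℝ) * (m ^ p.1 * (1 - m) ^ p.2) * φ p.1 := by
  set n := Fintype.card ι
  have hint :
      ∀ T : Finset ι, Integrable (fun ω => bernoulliWeight univ (X · ω) T * φ #T) μ :=
    fun T => (Integrable.of_mem_Icc 0 1
      (Finset.measurable_prod _ fun i _ => by split_ifs <;> fun_prop).aemeasurable
      (ae_of_all _ fun ω => bernoulliWeight_mem_Icc (fun i _ => hrange i ω) T)).mul_const _
  calc ∫ ω, φ (∑ i, X i ω) ∂μ
      ≤ ∫ ω, ∑ T ∈ univ.powerset, bernoulliWeight univ (X · ω) T * φ #T ∂μ :=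
        integral_mono_of_nonneg (ae_of_all _ fun ω => hφ_nonneg _)
          (integrable_finsetSum _ fun T _ => hint T)
          (ae_of_all _ fun ω => by
            simpa using ConvexOn.map_add_sum_le_sum_bernoulliWeight (c := 0) univ
              (by simpa using hφ) (fun i _ => hrange i ω))
    _ = ∑ T ∈ univ.powerset, m ^ #T * (1 - m) ^ (n - #T) * φ #T := by
        rw [integral_finsetSum _ fun T _ => hint T]
        refine sum_congr rfl fun T _ => ?_
        rw [integral_mul_const, integral_bernoulliWeight hindep (fun i =>
          Integrable.of_mem_Icc 0 1 (hmeas i).aemeasurable (ae_of_all _ (hrange i))) hmean]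
    _ = ∑ p ∈ antidiagonal n, (n.choose p.1 : ℝ) * (m ^ p.1 * (1 - m) ^ p.2) * φ p.1 := by
        rw [sum_powerset_apply_card (fun k => m ^ k * (1 - m) ^ (n - k) * φ k), card_univ,
          Nat.sum_antidiagonal_eq_sum_range_succ
            (fun k l => (n.choose k : ℝ) * (m ^ k * (1 - m) ^ l) * φ k)]
        simp only [nsmul_eq_mul, mul_assoc]
        rfl

end Expectation

theorem maurer_lemma_general {Ω : Type*} [MeasurableSpace Ω] (μ : Measure Ω) [IsProbabilityMeasure μ]
    (N : ℕ) (hN : 0 < N) (X : Fin N → Ω → ℝ)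
    (hmeas : ∀ i, Measurable (X i))
    (hrange : ∀ i ω, X i ω ∈ Set.Icc (0 : ℝ) 1)
    (hindep : iIndepFun X μ)
    (μ₀ : ℝ) (hmean : ∀ i, ∫ ω, X i ω ∂μ = μ₀) :
    ∫ ω, Real.exp ((N : ℝ) * bkl ((∑ i, X i ω) / N) μ₀) ∂μ ≤ 2 * Real.sqrt N := by
  have hμ₀ : μ₀ ∈ Set.Icc 0 1 := by
    rw [← hmean ⟨0, hN⟩]
    exact ⟨integral_nonneg fun ω => (hrange _ ω).1,
      (integral_mono_of_nonneg (ae_of_all _ fun ω => (hrange _ ω).1) (integrable_const 1)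
        (ae_of_all _ fun ω => (hrange _ ω).2)).trans_eq (by simp)⟩
  have hbernoulli := integral_comp_sum_le_sum_choose_mul_pow hindep hmeas hrange hmean
    (φ := fun t => exp (N * bkl (t / N) μ₀))
    (by simpa using convexOn_exp_mul_bkl_div (Nat.cast_pos.mpr hN) μ₀) fun _ => (exp_pos _).le
  rw [Fintype.card_fin] at hbernoulli
  exact hbernoulli.trans (sum_choose_mul_pow_mul_exp_mul_bkl_le hN hμ₀)

/-- Maurer's lemma: if `X₁, …, X_N` are i.i.d. random variables with values in `[0,1]`
and mean `μ₀`, and `S_N = (1/N) ∑ Xᵢ` is their empirical mean, then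
`E[exp (N · kl(S_N ‖ μ₀))] ≤ 2√N`. -/
theorem maurer_lemma {Ω : Type*} [MeasurableSpace Ω] (μ : Measure Ω) [IsProbabilityMeasure μ]
    (N : ℕ) (hN : 0 < N) (X : Fin N → Ω → ℝ)
    (hmeas : ∀ i, Measurable (X i))
    (hrange : ∀ i ω, X i ω ∈ Set.Icc (0 : ℝ) 1)
    (hindep : iIndepFun X μ)
    (hident : ∀ i j, μ.map (X i) = μ.map (X j))
    (μ₀ : ℝ) (hmean : ∀ i, ∫ ω, X i ω ∂μ = μ₀) :
    ∫ ω, Real.exp ((N : ℝ) * bkl ((∑ i, X i ω) / N) μ₀) ∂μ ≤ 2 * Real.sqrt N :=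
  maurer_lemma_general μ N hN X hmeas hrange hindep μ₀ hmean
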